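/- arXiv:1308.2905 — 5 statements merged into one kernel-verified Lean document; each statement's English description precedes it below -/
import Mathlib

section
/- Let T be the doubling map on [0,1] defined by Tx = 2x for x in [0,1/2] and Tx = 2x-1 for x in (1/2,1]. If 0 < a < 1/4 and b > 1/2, or if a < 1/2 and b > 3/4, then the only points x in [0,1] whose entire forward T-orbit avoids the open interval (a,b) are x = 0 and x = 1. -/
/-!
Away from its endpoints the doubling map doubles the distance to `0` on `(0, 1/2]` and the
distance to `1` on `(1/2, 1)`. A point of `(0, 1)` can therefore not stay forever in a region
where one of these distances is doubled, so its orbit enters both `(1/4, 1/2]` and `[1/2, 3/4)`,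
each of which lies inside `(a, b)` under one of the two hypotheses. The endpoints `0` and `1`
are fixed points of `T`.
-/

noncomputable def T (x : ℝ) : ℝ := if x ≤ 1/2 then 2*x else 2*x - 1

lemma T_of_le {x : ℝ} (hx : x ≤ 1/2) : T x = 2 * x := if_pos hx

lemma T_of_gt {x : ℝ} (hx : 1/2 < x) : T x = 2 * x - 1 := if_neg hx.not_ge

lemma T_zero : T 0 = 0 := by norm_num [T]

lemma T_one : T 1 = 1 := by norm_num [T]

theorem Function.exists_iterate_mem_of_expanding {α : Type*} (f : α → α) (d : α → ℝ)
    {S U : Set α} {r M : ℝ} (hr : 1 < r) (hd_pos : ∀ x ∈ S, 0 < d x)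
    (hd_le : ∀ x ∈ S, d x ≤ M) (hstep : ∀ x ∈ S \ U, f x ∈ S ∧ r * d x ≤ d (f x))
    {x : α} (hx : x ∈ S) : ∃ n, f^[n] x ∈ U := by
  by_contra! hU
  have hgrowth : ∀ n, f^[n] x ∈ S ∧ r ^ n * d x ≤ d (f^[n] x) := by
    intro n
    induction n with
    | zero => simpa using hx
    | succ n ih =>
      obtain ⟨hS, hd⟩ := hstep _ ⟨ih.1, hU n⟩
      rw [Function.iterate_succ_apply']
      refine ⟨hS, ?_⟩
      calc r ^ (n + 1) * d x = r * (r ^ n * d x) := by ring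
        _ ≤ r * d (f^[n] x) := by gcongr; linarith
        _ ≤ d (f (f^[n] x)) := hd
  obtain ⟨n, hn⟩ := pow_unbounded_of_one_lt (M / d x) hr
  have hdx := hd_pos x hx
  have hle : r ^ n * d x ≤ M := (hgrowth n).2.trans (hd_le _ (hgrowth n).1)
  rw [div_lt_iff₀ hdx] at hn
  linarith

lemma exists_iterate_T_mem_Ioc_zero_half {x : ℝ} (hx : x ∈ Set.Ioo 0 1) :
    ∃ n, T^[n] x ∈ Set.Ioc 0 (1/2) := by
  refine Function.exists_iterate_mem_of_expanding T (fun y ↦ 1 - y) (M := 1) one_lt_two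
    (fun y hy ↦ by simp only [Set.mem_Ioo] at hy; linarith)
    (fun y hy ↦ by simp only [Set.mem_Ioo] at hy; linarith) (fun y ⟨hS, hU⟩ ↦ ?_) hx
  simp only [Set.mem_Ioo, Set.mem_Ioc, not_and_or, not_lt, not_le] at hS hU
  have hy : 1/2 < y := by rcases hU with h | h <;> linarith
  rw [T_of_gt hy]
  exact ⟨⟨by linarith, by linarith⟩, by linarith⟩

lemma exists_iterate_T_mem_Ico_half_one {x : ℝ} (hx : x ∈ Set.Ioo 0 1) :
    ∃ n, T^[n] x ∈ Set.Ico (1/2) 1 := by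
  refine Function.exists_iterate_mem_of_expanding T id one_lt_two
    (fun y hy ↦ hy.1) (fun y hy ↦ hy.2.le) (fun y ⟨hS, hU⟩ ↦ ?_) hx
  simp only [Set.mem_Ioo, Set.mem_Ico, not_and_or, not_lt, not_le] at hS hU
  have hy : y < 1/2 := by rcases hU with h | h <;> linarith
  rw [T_of_le hy.le]
  exact ⟨⟨by linarith, by linarith⟩, by simp⟩

lemma exists_iterate_T_mem_Ioc_quarter_half {x : ℝ} (hx : x ∈ Set.Ioc 0 (1/2)) :
    ∃ n, T^[n] x ∈ Set.Ioc (1/4) (1/2) := by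
  refine Function.exists_iterate_mem_of_expanding T id one_lt_two
    (fun y hy ↦ hy.1) (fun y hy ↦ hy.2) (fun y ⟨hS, hU⟩ ↦ ?_) hx
  simp only [Set.mem_Ioc, not_and_or, not_lt, not_le] at hS hU
  have hy : y ≤ 1/4 := by rcases hU with h | h <;> linarith
  rw [T_of_le (by linarith)]
  exact ⟨⟨by linarith, by linarith⟩, by simp⟩

lemma exists_iterate_T_mem_Ico_half_threeQuarters {x : ℝ} (hx : x ∈ Set.Ico (1/2) 1) :
    ∃ n, T^[n] x ∈ Set.Ico (1/2) (3/4) := by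
  refine Function.exists_iterate_mem_of_expanding T (fun y ↦ 1 - y) (M := 1) one_lt_two
    (fun y hy ↦ by simp only [Set.mem_Ico] at hy; linarith)
    (fun y hy ↦ by simp only [Set.mem_Ico] at hy; linarith) (fun y ⟨hS, hU⟩ ↦ ?_) hx
  simp only [Set.mem_Ico, not_and_or, not_lt, not_le] at hS hU
  have hy : 3/4 ≤ y := by rcases hU with h | h <;> linarith
  rw [T_of_gt (by linarith)]
  exact ⟨⟨by linarith, by linarith⟩, by linarith⟩

lemma exists_iterate_T_mem_Ioc_quarter_half_of_mem_Ioo {x : ℝ} (hx : x ∈ Set.Ioo 0 1) :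
    ∃ n, T^[n] x ∈ Set.Ioc (1/4) (1/2) := by
  obtain ⟨m, hm⟩ := exists_iterate_T_mem_Ioc_zero_half hx
  obtain ⟨n, hn⟩ := exists_iterate_T_mem_Ioc_quarter_half hm
  exact ⟨n + m, by rwa [Function.iterate_add_apply]⟩

lemma exists_iterate_T_mem_Ico_half_threeQuarters_of_mem_Ioo {x : ℝ} (hx : x ∈ Set.Ioo 0 1) :
    ∃ n, T^[n] x ∈ Set.Ico (1/2) (3/4) := by
  obtain ⟨m, hm⟩ := exists_iterate_T_mem_Ico_half_one hx
  obtain ⟨n, hn⟩ := exists_iterate_T_mem_Ico_half_threeQuarters hm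
  exact ⟨n + m, by rwa [Function.iterate_add_apply]⟩

theorem stmt_0_general (a b : ℝ) (ha : 0 < a) (hb : b < 1)
    (h : (a < 1/4 ∧ 1/2 < b) ∨ (a < 1/2 ∧ 3/4 < b)) :
    {x : ℝ | x ∈ Set.Icc (0:ℝ) 1 ∧ ∀ n : ℕ, T^[n] x ∉ Set.Ioo a b} = {0, 1} := by
  ext x
  simp only [Set.mem_ofPred_eq, Set.mem_insert_iff, Set.mem_singleton_iff]
  constructor
  · rintro ⟨hx, horbit⟩
    by_contra! hne
    have hx' : x ∈ Set.Ioo 0 1 :=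
      ⟨hx.1.lt_of_ne hne.1.symm, hx.2.lt_of_ne hne.2⟩
    rcases h with ⟨ha4, hb2⟩ | ⟨ha2, hb4⟩
    · obtain ⟨n, hn⟩ := exists_iterate_T_mem_Ioc_quarter_half_of_mem_Ioo hx'
      exact horbit n ⟨by linarith [hn.1], by linarith [hn.2]⟩
    · obtain ⟨n, hn⟩ := exists_iterate_T_mem_Ico_half_threeQuarters_of_mem_Ioo hx'
      exact horbit n ⟨by linarith [hn.1], by linarith [hn.2]⟩
  · rintro (rfl | rfl)
    · refine ⟨by norm_num, fun n hn ↦ ?_⟩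
      rw [Function.iterate_fixed T_zero] at hn
      linarith [hn.1]
    · refine ⟨by norm_num, fun n hn ↦ ?_⟩
      rw [Function.iterate_fixed T_one] at hn
      linarith [hn.2]

theorem stmt_0 (a b : ℝ) (ha : 0 < a) (hab : a < b) (hb : b < 1)
    (h : (a < 1/4 ∧ 1/2 < b) ∨ (a < 1/2 ∧ 3/4 < b)) :
    {x : ℝ | x ∈ Set.Icc (0:ℝ) 1 ∧ ∀ n : ℕ, T^[n] x ∉ Set.Ioo a b} = {0, 1} :=
  stmt_0_general a b ha hb h
end

section
/- For every n ≥ 3, the set {(2^n-2)/(2^n-1), (2^n-3)/(2^n-1), (2^n-5)/(2^n-1), (2^n-9)/(2^n-1), ..., (2^{n-1}-1)/(2^n-1)} (i.e., the points (2^n - 1 - 2^k)/(2^n-1) for k = 0,...,n-1) forms an n-cycle for the doubling map T, and this cycle is contained in the interval [(2^{n-1}-1)/(2^n-1), 1]. -/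
/-- `C` is an `n`-cycle (periodic orbit of prime period `n`) for the doubling map. -/
def IsCycle (n : ℕ) (C : Set ℝ) : Prop :=
  ∃ x : ℝ, x ∈ Set.Icc (0:ℝ) 1 ∧ T^[n] x = x ∧
    (∀ i < n, ∀ j < n, i ≠ j → T^[i] x ≠ T^[j] x) ∧
    C = {y | ∃ i < n, T^[i] x = y}

/-! In binary, `(2^n - 1 - 2^k) / (2^n - 1)` is the periodic expansion whose period is the block
of `n` ones with a zero in position `n - k`. Doubling shifts the block, so `T` sends the point of
index `k` to that of index `k + 1` (the leading digit is a one, so `T` subtracts `1`), and the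
point of index `n - 1`, the only one that starts with a zero, back to the point of index `0`. -/

lemma T_of_le_half {x : ℝ} (hx : x ≤ 1/2) : T x = 2*x := if_pos hx

lemma T_of_half_lt {x : ℝ} (hx : 1/2 < x) : T x = 2*x - 1 := if_neg hx.not_ge

noncomputable def cyclePoint (n k : ℕ) : ℝ := ((2:ℝ)^n - 1 - 2^k) / (2^n - 1)

section cyclePoint

variable {n k : ℕ}

lemma two_pow_sub_one_pos (hn : 0 < n) : (0:ℝ) < 2^n - 1 := by
  have : (2:ℝ) ≤ 2^n := by simpa using pow_le_pow_right₀ one_le_two hn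
  linarith

lemma T_cyclePoint_of_succ_lt (hk : k + 1 < n) : T (cyclePoint n k) = cyclePoint n (k + 1) := by
  obtain ⟨m, rfl⟩ : ∃ m, n = m + 1 := ⟨n - 1, by omega⟩
  have hD := two_pow_sub_one_pos (n := m + 1) (by omega)
  have hk' : (2:ℝ)^(k + 1) ≤ 2^m := pow_le_pow_right₀ one_le_two (by omega)
  have hm : (2:ℝ) ≤ 2^m := by simpa using pow_le_pow_right₀ one_le_two (show 1 ≤ m by omega)
  have hhalf : 1/2 < cyclePoint (m + 1) k := by
    rw [cyclePoint, lt_div_iff₀ hD]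
    rw [pow_succ] at hk' ⊢
    linarith
  rw [T_of_half_lt hhalf, cyclePoint, cyclePoint]
  field_simp
  ring

lemma T_cyclePoint_last (m : ℕ) : T (cyclePoint (m + 1) m) = cyclePoint (m + 1) 0 := by
  have hD := two_pow_sub_one_pos (n := m + 1) (by omega)
  have hhalf : cyclePoint (m + 1) m ≤ 1/2 := by
    rw [cyclePoint, div_le_iff₀ hD, pow_succ]
    linarith
  rw [T_of_le_half hhalf, cyclePoint, cyclePoint]
  field_simp
  ring

lemma iterate_T_cyclePoint_zero {i : ℕ} (hi : i < n) : T^[i] (cyclePoint n 0) = cyclePoint n i := by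
  induction i with
  | zero => rfl
  | succ i ih => rw [Function.iterate_succ_apply', ih (by omega), T_cyclePoint_of_succ_lt hi]

lemma iterate_T_cyclePoint_zero_period (n : ℕ) : T^[n] (cyclePoint n 0) = cyclePoint n 0 := by
  cases n with
  | zero => rfl
  | succ m =>
    rw [Function.iterate_succ_apply', iterate_T_cyclePoint_zero (Nat.lt_succ_self m),
      T_cyclePoint_last]

lemma eq_of_cyclePoint_eq {i j : ℕ} (hi : i < n) (h : cyclePoint n i = cyclePoint n j) : i = j := by
  have hD := (two_pow_sub_one_pos (n := n) (by omega)).ne'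
  rw [cyclePoint, cyclePoint, div_left_inj' hD, sub_right_inj] at h
  exact Nat.pow_right_injective le_rfl (by exact_mod_cast h)

lemma cyclePoint_mem_Icc (hk : k < n) :
    cyclePoint n k ∈ Set.Icc (((2:ℝ)^(n-1) - 1) / (2^n - 1)) 1 := by
  obtain ⟨m, rfl⟩ : ∃ m, n = m + 1 := ⟨n - 1, by omega⟩
  have hD := two_pow_sub_one_pos (n := m + 1) (by omega)
  have hk' : (2:ℝ)^k ≤ 2^m := pow_le_pow_right₀ one_le_two (by omega)
  rw [Nat.add_sub_cancel, cyclePoint, pow_succ]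
  rw [pow_succ] at hD
  constructor
  · exact div_le_div_of_nonneg_right (by linarith) hD.le
  · rw [div_le_one hD]
    linarith [pow_pos (two_pos (α := ℝ)) k]

lemma cyclePoint_zero_mem_Icc (n : ℕ) : cyclePoint n 0 ∈ Set.Icc 0 1 := by
  rcases n.eq_zero_or_pos with rfl | hn
  · norm_num [cyclePoint]
  · refine Set.Icc_subset_Icc ?_ le_rfl (cyclePoint_mem_Icc hn)
    have : (1:ℝ) ≤ 2^(n-1) := one_le_pow₀ one_le_two
    exact div_nonneg (by linarith) (two_pow_sub_one_pos hn).le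

end cyclePoint

theorem stmt_2_general (n : ℕ) :
    IsCycle n {y : ℝ | ∃ k < n, y = ((2:ℝ)^n - 1 - 2^k) / (2^n - 1)} ∧
    {y : ℝ | ∃ k < n, y = ((2:ℝ)^n - 1 - 2^k) / (2^n - 1)} ⊆
      Set.Icc (((2:ℝ)^(n-1) - 1) / (2^n - 1)) 1 := by
  refine ⟨⟨cyclePoint n 0, cyclePoint_zero_mem_Icc n, iterate_T_cyclePoint_zero_period n,
    ?_, ?_⟩, ?_⟩
  · intro i hi j hj hij h
    rw [iterate_T_cyclePoint_zero hi, iterate_T_cyclePoint_zero hj] at h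
    exact hij (eq_of_cyclePoint_eq hi h)
  · ext y
    constructor
    · rintro ⟨k, hk, rfl⟩
      exact ⟨k, hk, iterate_T_cyclePoint_zero hk⟩
    · rintro ⟨i, hi, rfl⟩
      exact ⟨i, hi, iterate_T_cyclePoint_zero hi⟩
  · rintro y ⟨k, hk, rfl⟩
    exact cyclePoint_mem_Icc hk

theorem stmt_2 (n : ℕ) (hn : 3 ≤ n) :
    IsCycle n {y : ℝ | ∃ k < n, y = ((2:ℝ)^n - 1 - 2^k) / (2^n - 1)} ∧
    {y : ℝ | ∃ k < n, y = ((2:ℝ)^n - 1 - 2^k) / (2^n - 1)} ⊆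
      Set.Icc (((2:ℝ)^(n-1) - 1) / (2^n - 1)) 1 :=
  stmt_2_general n
end

section
/- The point of [0,1] with binary expansion (0100100)^∞ is periodic of prime period 7 under the doubling map T, and its orbit is disjoint from the open interval (2/7, 32/63): every point of the orbit whose expansion starts with 0 is strictly less than 2/7 and every point whose expansion starts with 1 is strictly greater than 32/63. -/
/-! On fractions `k / q` with `q` odd, `T` acts as multiplication by `2` modulo `q`. Hence
`T^[i] (36 / 127) = (2 ^ i * 36 mod 127) / 127`, which depends only on `i mod 7` because
`2 ^ 7 = 128 ≡ 1 [MOD 127]`; the claims then reduce to checking the seven points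
`36, 72, 17, 34, 68, 9, 18` over `127`. -/

lemma T_natCast_div_of_odd {q k : ℕ} (hq : Odd q) (hk : k < q) :
    T (k / q) = ((2 * k % q : ℕ) : ℝ) / q := by
  have hq0 : (0 : ℝ) < q := by exact_mod_cast hk.pos
  have hne : 2 * k ≠ q := fun h => Nat.not_even_iff_odd.mpr hq (h ▸ even_two_mul k)
  unfold T
  split_ifs with h
  · have h2 : 2 * k < q := by
      have : (2 * k : ℝ) ≤ q := by rw [div_le_iff₀ hq0] at h; linarith
      exact lt_of_le_of_ne (by exact_mod_cast this) hne
    rw [Nat.mod_eq_of_lt h2]; push_cast; ring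
  · have h2 : q ≤ 2 * k := by
      have : (q : ℝ) < 2 * k := by rw [not_le, lt_div_iff₀ hq0] at h; linarith
      exact_mod_cast this.le
    rw [Nat.mod_eq_sub_mod h2, Nat.mod_eq_of_lt (by omega), Nat.cast_sub h2]
    field_simp; push_cast; ring

lemma iterate_T_natCast_div_of_odd {q k : ℕ} (hq : Odd q) (hk : k < q) (i : ℕ) :
    T^[i] (k / q) = ((2 ^ i * k % q : ℕ) : ℝ) / q := by
  induction i with
  | zero => simp [Nat.mod_eq_of_lt hk]
  | succ i ih =>
    rw [Function.iterate_succ_apply', ih,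
      T_natCast_div_of_odd hq (Nat.mod_lt _ hq.pos), Nat.mul_mod, Nat.mod_mod, ← Nat.mul_mod,
      pow_succ, mul_comm _ 2, mul_assoc]

lemma iterate_T_36_div_127 (i : ℕ) :
    T^[i] ((36 : ℝ) / 127) = ((2 ^ (i % 7) * 36 % 127 : ℕ) : ℝ) / 127 := by
  have h := iterate_T_natCast_div_of_odd (q := 127) (k := 36) (by decide) (by norm_num) i
  have hmod : 2 ^ i * 36 ≡ 2 ^ (i % 7) * 36 [MOD 127] := by
    have h7 : 2 ^ 7 ≡ 1 [MOD 127] := by decide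
    conv_lhs => rw [← Nat.div_add_mod i 7, pow_add, pow_mul]
    simpa using ((h7.pow (i / 7)).mul_right (2 ^ (i % 7))).mul_right 36
  rw [hmod] at h
  exact_mod_cast h

theorem stmt_10 :
    T^[7] ((36:ℝ)/127) = 36/127 ∧
    (∀ m : ℕ, 0 < m → m < 7 → T^[m] ((36:ℝ)/127) ≠ 36/127) ∧
    (∀ i : ℕ, T^[i] ((36:ℝ)/127) ∉ Set.Ioo (2/7 : ℝ) (32/63)) ∧
    (∀ i : ℕ, (T^[i] ((36:ℝ)/127) < 1/2 → T^[i] ((36:ℝ)/127) < 2/7) ∧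
      (1/2 < T^[i] ((36:ℝ)/127) → 32/63 < T^[i] ((36:ℝ)/127))) := by
  refine ⟨by rw [iterate_T_36_div_127]; norm_num, fun m hm hm7 => ?_, fun i => ?_, fun i => ?_⟩
  · rw [iterate_T_36_div_127]
    interval_cases m <;> norm_num
  all_goals
    rw [iterate_T_36_div_127]
    have := Nat.mod_lt i (by norm_num : 7 > 0)
    interval_cases i % 7 <;> norm_num
end

section
/- Let r1 = p1/q1 < r2 = p2/q2 ≤ 1/2 be Farey neighbours (p2 q1 - p1 q2 = 1) and r3 = (p1+p2)/(q1+q2) their mediant. Writing s_i = s(r_i) and t_i = t(r_i), one has s_3 = s_2 s_1 (concatenation of words). -/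
/-- `u` is a (contiguous) factor of `w`. -/
def IsFactor (u w : List Bool) : Prop := ∃ l r : List Bool, w = l ++ u ++ r

/-- A binary word is balanced: any two factors of equal length have numbers of
`true`s (ones) differing by at most 1. -/
def BalancedW (w : List Bool) : Prop :=
  ∀ u v : List Bool, IsFactor u w → IsFactor v w → u.length = v.length →
    (u.count true : ℤ) - (v.count true : ℤ) ≤ 1

/-- A word is cyclically balanced if all its cyclic rotations are balanced. -/
def CyclBalanced (w : List Bool) : Prop := ∀ k : ℕ, BalancedW (w.rotate k)

/-- Lexicographic `≤` on finite binary words (`false < true`). -/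
def WordLe (u v : List Bool) : Prop := u = v ∨ List.Lex (· < ·) u v

/-- `w = s(p/q)`: the lexicographically largest cyclically balanced word of
length `q` with `p` ones beginning with `0`. -/
def IsSWord (p q : ℕ) (w : List Bool) : Prop :=
  w.length = q ∧ w.count true = p ∧ CyclBalanced w ∧ w.head? = some false ∧
  ∀ w' : List Bool, w'.length = q → w'.count true = p → CyclBalanced w' →
    w'.head? = some false → WordLe w' w

/-- `w = t(p/q)`: the lexicographically smallest cyclically balanced word of
length `q` with `p` ones beginning with `1`. -/
def IsTWord (p q : ℕ) (w : List Bool) : Prop :=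
  w.length = q ∧ w.count true = p ∧ CyclBalanced w ∧ w.head? = some true ∧
  ∀ w' : List Bool, w'.length = q → w'.count true = p → CyclBalanced w' →
    w'.head? = some true → WordLe w w'

/-!
`s(p/q)` is the lower mechanical word of slope `p/q` and intercept `(q-p-1)/q`, whose prefix of
length `m+1` contains `⌈m p/q⌉` ones. It is cyclically balanced. Conversely, the `q` cyclic windows
of length `m` of a cyclically balanced word with `p` ones have `m p` ones in total and pairwise
differ by at most one, so none has more than `⌈m p/q⌉` ones; hence a word starting with `0` that
exceeds the mechanical word lexicographically would have a prefix with too many ones.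
For Farey neighbours, `⌈m (p₁+p₂)/(q₁+q₂)⌉ = ⌈m p₂/q₂⌉` for `m < q₂` and
`⌈m (p₁+p₂)/(q₁+q₂)⌉ = p₂ + ⌈(m-q₂) p₁/q₁⌉` for `q₂ ≤ m < q₁+q₂`, which is `s₃ = s₂ s₁`.
-/

namespace MechanicalWord

variable (p q c : ℕ)

def height (i : ℕ) : ℕ := (i * p + c) / q

def letter (i : ℕ) : Bool := decide (height p q c i < height p q c (i + 1))

def segment (a n : ℕ) : List Bool := (List.range' a n).map (letter p q c)

variable {p q c}

@[simp]
theorem length_segment (a n : ℕ) : (segment p q c a n).length = n := by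
  simp [segment]

theorem segment_add (a m n : ℕ) :
    segment p q c a (m + n) = segment p q c a m ++ segment p q c (a + m) n := by
  rw [segment, segment, segment, ← List.map_append, List.range'_append_1]

theorem segment_one (a : ℕ) : segment p q c a 1 = [letter p q c a] := rfl

theorem getElem_segment (a n j : ℕ) (hj : j < (segment p q c a n).length) :
    (segment p q c a n)[j] = letter p q c (a + j) := by
  simp [segment]

theorem take_segment {a n k : ℕ} (hk : k ≤ n) :
    (segment p q c a n).take k = segment p q c a k := by
  obtain ⟨m, rfl⟩ := Nat.exists_eq_add_of_le hk
  simp [segment_add]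

theorem drop_segment {a n k : ℕ} (hk : k ≤ n) :
    (segment p q c a n).drop k = segment p q c (a + k) (n - k) := by
  obtain ⟨m, rfl⟩ := Nat.exists_eq_add_of_le hk
  simp [segment_add]

theorem height_mono : Monotone (height p q c) :=
  fun _ _ h => Nat.div_le_div_right (by gcongr)

theorem height_add_period (hq : 0 < q) (i : ℕ) :
    height p q c (i + q) = height p q c i + p := by
  rw [height, show (i + q) * p + c = i * p + c + p * q by ring, Nat.add_mul_div_right _ _ hq,
    height]

theorem segment_add_period (hq : 0 < q) (a n : ℕ) :
    segment p q c (a + q) n = segment p q c a n := by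
  refine List.ext_getElem (by simp) fun j _ _ => ?_
  simp only [getElem_segment, letter, show a + q + j = a + j + q by omega,
    show a + j + q + 1 = a + j + 1 + q by omega, height_add_period hq, Nat.add_lt_add_iff_right]

theorem height_add_le (i m : ℕ) :
    height p q c i + m * p / q ≤ height p q c (i + m) ∧
      height p q c (i + m) ≤ height p q c i + m * p / q + 1 := by
  rcases Nat.eq_zero_or_pos q with rfl | hq
  · simp [height]
  rw [height, height, show (i + m) * p + c = (i * p + c) + m * p by ring,
    Nat.add_div (a := i * p + c) hq]
  split_ifs <;> omega

theorem height_succ (hpq : p ≤ q) (i : ℕ) :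
    height p q c (i + 1) = height p q c i + (letter p q c i).toNat := by
  have h_mono := height_mono (p := p) (q := q) (c := c) (Nat.le_add_right i 1)
  have h_step : height p q c (i + 1) ≤ height p q c i + 1 := by
    rcases Nat.eq_zero_or_pos q with rfl | hq
    · simp [height]
    rw [height, height, ← Nat.add_div_right _ hq]
    exact Nat.div_le_div_right (by nlinarith)
  by_cases h : height p q c i < height p q c (i + 1) <;> simp only [letter, h] <;> simp <;> omega

theorem count_segment (hpq : p ≤ q) (a n : ℕ) :
    (segment p q c a n).count true + height p q c a = height p q c (a + n) := by
  induction n with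
  | zero => simp [segment]
  | succ n ih =>
    rw [segment_add, List.count_append, segment_one, add_right_comm, ih, ← add_assoc,
      height_succ hpq]
    cases letter p q c (a + n) <;> simp

theorem count_segment_le (hpq : p ≤ q) (x y m : ℕ) :
    (segment p q c x m).count true ≤ (segment p q c y m).count true + 1 := by
  have hx := count_segment (c := c) hpq x m
  have hy := count_segment (c := c) hpq y m
  have := (height_add_le (p := p) (q := q) (c := c) x m).2
  have := (height_add_le (p := p) (q := q) (c := c) y m).1
  omega

theorem exists_eq_segment_of_isFactor {u : List Bool} {a n : ℕ}
    (hu : IsFactor u (segment p q c a n)) : ∃ x, u = segment p q c x u.length := by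
  obtain ⟨l, r, hw⟩ := hu
  have hlen := congrArg List.length hw
  simp only [length_segment, List.length_append] at hlen
  refine ⟨a + l.length, ?_⟩
  have : u = ((segment p q c a n).drop l.length).take u.length := by simp [hw]
  rwa [drop_segment (by omega), take_segment (by omega)] at this

theorem balanced_segment (hpq : p ≤ q) (a n : ℕ) : BalancedW (segment p q c a n) := by
  intro u v hu hv hlen
  obtain ⟨x, hx⟩ := exists_eq_segment_of_isFactor hu
  obtain ⟨y, hy⟩ := exists_eq_segment_of_isFactor hv
  rw [hx, hy, hlen]
  have := count_segment_le (c := c) hpq x y v.length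
  omega

theorem rotate_segment (hq : 0 < q) (a : ℕ) {k : ℕ} (hk : k ≤ q) :
    (segment p q c a q).rotate k = segment p q c (a + k) q := by
  rw [List.rotate_eq_drop_append_take (by simpa), drop_segment hk, take_segment hk,
    ← segment_add_period hq a, show a + q = a + k + (q - k) by omega, ← segment_add,
    Nat.sub_add_cancel hk]

theorem cyclBalanced_segment (hq : 0 < q) (hpq : p ≤ q) (a : ℕ) :
    CyclBalanced (segment p q c a q) := by
  intro k
  rw [← List.rotate_mod, length_segment, rotate_segment hq a (Nat.mod_lt k hq).le]
  exact balanced_segment hpq _ _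

theorem segment_congr {p' q' c' a a' n d : ℕ}
    (h : ∀ j ≤ n, height p q c (a + j) = d + height p' q' c' (a' + j)) :
    segment p q c a n = segment p' q' c' a' n := by
  refine List.ext_getElem (by simp) fun j hj _ => ?_
  simp only [length_segment] at hj
  simp only [getElem_segment, letter, add_assoc, h j hj.le, h (j + 1) hj, add_lt_add_iff_left]

def sWord (p q : ℕ) : List Bool := segment p q (q - p - 1) 0 q

theorem height_sWord_zero (hpq : p < q) : height p q (q - p - 1) 0 = 0 :=
  Nat.div_eq_of_lt (by omega)

theorem height_sWord_succ_eq_iff (hpq : p < q) {m t : ℕ} :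
    height p q (q - p - 1) (m + 1) = t ↔ m * p ≤ t * q ∧ t * q < m * p + q := by
  rw [height, show (m + 1) * p + (q - p - 1) = m * p + q - 1 by rw [add_one_mul]; omega,
    Nat.div_eq_iff (by omega)]
  omega

@[simp]
theorem length_sWord (p q : ℕ) : (sWord p q).length = q := length_segment _ _

theorem count_take_sWord (hpq : p < q) {i : ℕ} (hi : i ≤ q) :
    ((sWord p q).take i).count true = height p q (q - p - 1) i := by
  have := count_segment (c := q - p - 1) hpq.le 0 i
  rwa [height_sWord_zero hpq, zero_add, add_zero, ← take_segment hi] at this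

theorem count_sWord (hpq : p < q) : (sWord p q).count true = p := by
  have hperiod := height_add_period (p := p) (c := q - p - 1) (by omega : 0 < q) 0
  rw [zero_add, height_sWord_zero hpq, zero_add] at hperiod
  rw [← List.take_of_length_le (length_sWord p q).le, count_take_sWord hpq le_rfl, hperiod]

theorem head_sWord (hpq : p < q) : (sWord p q).head? = some false := by
  have h1 : height p q (q - p - 1) (0 + 1) = 0 := (height_sWord_succ_eq_iff hpq).2 (by simp; omega)
  obtain ⟨n, rfl⟩ := Nat.exists_eq_add_of_lt hpq
  simp [sWord, segment, List.range'_succ, letter, h1, height_sWord_zero hpq]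

theorem cyclBalanced_sWord (hpq : p < q) : CyclBalanced (sWord p q) :=
  cyclBalanced_segment (by omega) hpq.le 0

section Mediant

variable {p1 q1 p2 q2 : ℕ}

theorem mediant_ceil_left (hF : (p2 : ℤ) * q1 - p1 * q2 = 1) {m t : ℕ}
    (hm : m < q2) (h : m * p2 ≤ t * q2 ∧ t * q2 < m * p2 + q2) :
    m * (p1 + p2) ≤ t * (q1 + q2) ∧ t * (q1 + q2) < m * (p1 + p2) + (q1 + q2) := by
  obtain ⟨h1, h2⟩ := h
  zify at *
  have key : ((q1 : ℤ) + q2) * (m * p2 - t * q2) - q2 * (m * (p1 + p2) - t * (q1 + q2)) = m := by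
    linear_combination (m : ℤ) * hF
  constructor <;> nlinarith

theorem mediant_ceil_right (hF : (p2 : ℤ) * q1 - p1 * q2 = 1) (hq2 : 0 < q2) {n t : ℕ}
    (hn : n < q1) (h : n * p1 ≤ t * q1 ∧ t * q1 < n * p1 + q1) :
    (q2 + n) * (p1 + p2) ≤ (p2 + t) * (q1 + q2) ∧
      (p2 + t) * (q1 + q2) < (q2 + n) * (p1 + p2) + (q1 + q2) := by
  obtain ⟨h1, h2⟩ := h
  zify at *
  have key : (q1 : ℤ) * (n * (p1 + p2) - t * (q1 + q2)) - (q1 + q2) * (n * p1 - t * q1) = n := by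
    linear_combination (n : ℤ) * hF
  constructor <;> nlinarith

variable (h1q : p1 < q1) (h2q : p2 < q2) (hF : (p2 : ℤ) * q1 - p1 * q2 = 1)
include h1q h2q hF

theorem height_mediant_left {i : ℕ} (hi : i ≤ q2) :
    height (p1 + p2) (q1 + q2) (q1 + q2 - (p1 + p2) - 1) i = height p2 q2 (q2 - p2 - 1) i := by
  cases i with
  | zero => rw [height_sWord_zero (by omega), height_sWord_zero h2q]
  | succ m =>
    rw [height_sWord_succ_eq_iff (by omega)]
    exact mediant_ceil_left hF (by omega) ((height_sWord_succ_eq_iff h2q).1 rfl)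

theorem height_mediant_right {j : ℕ} (hj : j ≤ q1) :
    height (p1 + p2) (q1 + q2) (q1 + q2 - (p1 + p2) - 1) (q2 + j) =
      p2 + height p1 q1 (q1 - p1 - 1) j := by
  cases j with
  | zero =>
    have hperiod := height_add_period (p := p2) (c := q2 - p2 - 1) (by omega : 0 < q2) 0
    rw [zero_add, height_sWord_zero h2q, zero_add] at hperiod
    rw [add_zero, height_mediant_left h1q h2q hF le_rfl, hperiod, height_sWord_zero h1q, add_zero]
  | succ n =>
    rw [← add_assoc, height_sWord_succ_eq_iff (by omega)]
    exact mediant_ceil_right hF (by omega) (by omega) ((height_sWord_succ_eq_iff h1q).1 rfl)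

theorem sWord_mediant : sWord (p1 + p2) (q1 + q2) = sWord p2 q2 ++ sWord p1 q1 := by
  have hsplit := segment_add (p := p1 + p2) (q := q1 + q2) (c := q1 + q2 - (p1 + p2) - 1) 0 q2 q1
  rw [Nat.add_comm q2 q1, zero_add] at hsplit
  rw [sWord, hsplit, sWord, sWord]
  congr 1
  · exact segment_congr (d := 0) fun j hj => by
      simp only [zero_add, height_mediant_left h1q h2q hF hj]
  · exact segment_congr (d := p2) fun j hj => by
      simp only [zero_add, height_mediant_right h1q h2q hF hj]

end Mediant

end MechanicalWord

def cyclicCount (w : List Bool) (a n : ℕ) : ℕ := ((w.rotate a).take n).count true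

section CyclicCount

variable {w : List Bool}

theorem take_rotate_of_add_le {α : Type*} {l : List α} {m k : ℕ} (h : m + k ≤ l.length) :
    (l.rotate m).take k = (l.drop m).take k := by
  rw [List.rotate_eq_drop_append_take (by omega)]
  exact List.take_append_of_le_length (by simp; omega)

theorem cyclicCount_mod (w : List Bool) (a n : ℕ) :
    cyclicCount w (a % w.length) n = cyclicCount w a n := by
  rw [cyclicCount, List.rotate_mod, cyclicCount]

theorem cyclicCount_add_length (w : List Bool) (a n : ℕ) :
    cyclicCount w (a + w.length) n = cyclicCount w a n := by
  rw [← cyclicCount_mod, Nat.add_mod_right, cyclicCount_mod]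

theorem cyclicCount_length (w : List Bool) (a : ℕ) :
    cyclicCount w a w.length = w.count true := by
  rw [cyclicCount, List.take_of_length_le (by simp)]
  exact (List.rotate_perm w a).count_eq true

theorem cyclicCount_add {m k : ℕ} (h : m + k ≤ w.length) (a : ℕ) :
    cyclicCount w a (m + k) = cyclicCount w a m + cyclicCount w (a + m) k := by
  simp only [cyclicCount]
  rw [List.take_add, List.count_append, ← List.rotate_rotate w a m,
    take_rotate_of_add_le (l := w.rotate a) (by simpa)]

theorem cyclicCount_eq_sum {n : ℕ} (hn : n ≤ w.length) (a : ℕ) :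
    cyclicCount w a n = ∑ j ∈ Finset.range n, cyclicCount w (a + j) 1 := by
  induction n with
  | zero => simp [cyclicCount]
  | succ n ih => rw [cyclicCount_add hn, ih (by omega), Finset.sum_range_succ]

theorem sum_cyclicCount {n : ℕ} (hn : n ≤ w.length) :
    ∑ a ∈ Finset.range w.length, cyclicCount w a n = n * w.count true := by
  calc ∑ a ∈ Finset.range w.length, cyclicCount w a n
      = ∑ a ∈ Finset.range w.length, ∑ j ∈ Finset.range n, cyclicCount w (a + j) 1 :=
        Finset.sum_congr rfl fun a _ => cyclicCount_eq_sum hn a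
    _ = ∑ j ∈ Finset.range n, ∑ a ∈ Finset.range w.length, cyclicCount w (j + a) 1 := by
        rw [Finset.sum_comm]
        simp only [add_comm]
    _ = ∑ j ∈ Finset.range n, w.count true := Finset.sum_congr rfl fun j _ => by
        rw [← cyclicCount_eq_sum le_rfl, cyclicCount_length]
    _ = n * w.count true := by simp

theorem exists_cyclicCount_add_eq (hpos : 0 < w.length) (a b n : ℕ) :
    ∃ d < w.length, cyclicCount w (a + d) n = cyclicCount w b n := by
  refine ⟨(b + (w.length - a % w.length)) % w.length, Nat.mod_lt _ hpos, ?_⟩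
  have h₁ := Nat.mod_add_div a w.length
  have h₂ := Nat.mod_lt a hpos
  rw [← cyclicCount_mod w (a + _), ← cyclicCount_mod w b, Nat.add_mod_mod,
    show a + (b + (w.length - a % w.length)) = b + w.length * (a / w.length + 1) by
      rw [Nat.mul_add_one]; omega,
    Nat.add_mul_mod_self_left]

end CyclicCount

namespace CyclBalanced

variable {w : List Bool} (hw : CyclBalanced w)
include hw

theorem cyclicCount_le_of_add_le {d n : ℕ} (h : d + n ≤ w.length) (a : ℕ) :
    cyclicCount w a n ≤ cyclicCount w (a + d) n + 1 ∧
      cyclicCount w (a + d) n ≤ cyclicCount w a n + 1 := by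
  have hshift : cyclicCount w (a + d) n = (((w.rotate a).drop d).take n).count true := by
    rw [cyclicCount, ← List.rotate_rotate, take_rotate_of_add_le (by simpa)]
  have hfac₀ : IsFactor ((w.rotate a).take n) (w.rotate a) :=
    ⟨[], _, (List.take_append_drop n _).symm⟩
  have hfac : IsFactor (((w.rotate a).drop d).take n) (w.rotate a) :=
    ⟨(w.rotate a).take d, ((w.rotate a).drop d).drop n, by simp⟩
  have hlen : ((w.rotate a).take n).length = (((w.rotate a).drop d).take n).length := by
    simp; omega
  have h₁ := hw a _ _ hfac₀ hfac hlen
  have h₂ := hw a _ _ hfac hfac₀ hlen.symm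
  rw [hshift, cyclicCount]
  omega

theorem cyclicCount_le_add_one {n : ℕ} (hn : n ≤ w.length) (a b : ℕ) :
    cyclicCount w a n ≤ cyclicCount w b n + 1 := by
  rcases Nat.eq_zero_or_pos w.length with hzero | hpos
  · simp [cyclicCount, List.length_eq_zero_iff.1 hzero]
  obtain ⟨d, hd, hd_eq⟩ := exists_cyclicCount_add_eq hpos a b n
  rw [← hd_eq]
  by_cases hdn : d + n ≤ w.length
  · exact (hw.cyclicCount_le_of_add_le hdn a).1
  by_cases hnd : n ≤ d
  · have := (hw.cyclicCount_le_of_add_le (d := w.length - d) (n := n) (by omega) (a + d)).2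
    rwa [add_assoc, Nat.add_sub_cancel' hd.le, cyclicCount_add_length] at this
  -- the windows overlap on both sides, so compare their complements instead
  have hcompl : ∀ b, cyclicCount w b n + cyclicCount w (b + n) (w.length - n) = w.count true :=
    fun b => by rw [← cyclicCount_add (by omega), Nat.add_sub_cancel' hn, cyclicCount_length]
  have := (hw.cyclicCount_le_of_add_le (d := d) (n := w.length - n) (by omega) (a + n)).2
  have := hcompl a
  have := hcompl (a + d)
  rw [add_right_comm] at this
  omega

theorem length_mul_cyclicCount_lt (hpos : 0 < w.length) {n : ℕ} (hn : n ≤ w.length) (a : ℕ) :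
    w.length * cyclicCount w a n < n * w.count true + w.length := by
  calc w.length * cyclicCount w a n
      = ∑ _b ∈ Finset.range w.length, cyclicCount w a n := by simp
    _ < ∑ b ∈ Finset.range w.length, (cyclicCount w b n + 1) := by
        refine Finset.sum_lt_sum (fun b _ => hw.cyclicCount_le_add_one hn a b)
          ⟨a % w.length, by simp [Nat.mod_lt a hpos], by rw [cyclicCount_mod]; omega⟩
    _ = n * w.count true + w.length := by
        rw [Finset.sum_add_distrib, sum_cyclicCount hn]
        simp

theorem length_mul_count_take_lt (hh : w.head? = some false) {k : ℕ} (hk : k < w.length) :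
    w.length * (w.take (k + 1)).count true < k * w.count true + w.length := by
  obtain ⟨t, rfl⟩ := List.head?_eq_some_iff.1 hh
  have hcount : ((false :: t).take (k + 1)).count true = cyclicCount (false :: t) 1 k := by
    simp only [cyclicCount, List.rotate_cons_succ, List.rotate_zero, List.take_succ_cons,
      List.count_cons_of_ne Bool.false_ne_true]
    rw [List.take_append_of_le_length (by simp at hk; omega)]
  rw [hcount]
  exact hw.length_mul_cyclicCount_lt (by omega) hk.le 1

end CyclBalanced

theorem List.exists_false_true_of_lt {u v : List Bool} (h : u < v) (hlen : u.length = v.length) :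
    ∃ i, ∃ (hu : i < u.length) (hv : i < v.length),
      u.take i = v.take i ∧ u[i] = false ∧ v[i] = true := by
  rcases List.lt_iff_exists.1 h with ⟨-, hlt⟩ | ⟨i, hu, hv, hpre, hi⟩
  · omega
  refine ⟨i, hu, hv, List.ext_getElem (by simp; omega) fun j hj _ => ?_, Bool.lt_iff.1 hi⟩
  simp only [List.length_take] at hj
  simpa using hpre j (by omega)

namespace MechanicalWord

theorem le_sWord {p q : ℕ} (hpq : p < q) {w : List Bool} (hl : w.length = q)
    (hc : w.count true = p) (hw : CyclBalanced w) (hh : w.head? = some false) :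
    w ≤ sWord p q := by
  by_contra hlt
  obtain ⟨i, hi, hiw, hpre, hs, hw1⟩ :=
    List.exists_false_true_of_lt (not_le.1 hlt) (by rw [length_sWord, hl])
  simp only [length_sWord] at hi
  have hcount_w : (w.take (i + 1)).count true = height p q (q - p - 1) i + 1 := by
    rw [List.take_add_one, List.getElem?_eq_getElem hiw, hw1, ← hpre, List.count_append,
      count_take_sWord hpq hi.le]
    rfl
  have hflat : height p q (q - p - 1) (i + 1) = height p q (q - p - 1) i := by
    have hletter : letter p q (q - p - 1) i = false := by simpa [sWord, getElem_segment] using hs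
    rw [height_succ hpq.le, hletter]
    rfl
  have hceil := ((height_sWord_succ_eq_iff hpq).1 hflat).1
  have hbound := hw.length_mul_count_take_lt hh (hl ▸ hi)
  rw [hcount_w, hl, hc] at hbound
  nlinarith

end MechanicalWord

theorem IsSWord.lt {p q : ℕ} {s : List Bool} (hs : IsSWord p q s) : p < q := by
  obtain ⟨hl, hc, -, hh, -⟩ := hs
  obtain ⟨t, rfl⟩ := List.head?_eq_some_iff.1 hh
  simp only [List.count_cons_of_ne Bool.false_ne_true, List.length_cons] at hc hl
  have := List.count_le_length (a := true) (l := t)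
  omega

theorem IsSWord.eq_sWord {p q : ℕ} {s : List Bool} (hs : IsSWord p q s) :
    s = MechanicalWord.sWord p q := by
  have hpq := hs.lt
  obtain ⟨hl, hc, hcb, hh, hmax⟩ := hs
  refine le_antisymm (MechanicalWord.le_sWord hpq hl hc hcb hh) (le_iff_eq_or_lt.2 ?_)
  exact hmax _ (MechanicalWord.length_sWord p q) (MechanicalWord.count_sWord hpq)
    (MechanicalWord.cyclBalanced_sWord hpq) (MechanicalWord.head_sWord hpq)

theorem stmt_12_general (p1 q1 p2 q2 : ℕ)
    (h1q : p1 < q1) (h2q : p2 < q2)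
    (hfarey : (p2 : ℤ) * q1 - (p1 : ℤ) * q2 = 1)
    (s1 s2 s3 : List Bool)
    (hs1 : IsSWord p1 q1 s1) (hs2 : IsSWord p2 q2 s2)
    (hs3 : IsSWord (p1 + p2) (q1 + q2) s3) :
    s3 = s2 ++ s1 := by
  rw [hs1.eq_sWord, hs2.eq_sWord, hs3.eq_sWord]
  exact MechanicalWord.sWord_mediant h1q h2q hfarey

theorem stmt_12 (p1 q1 p2 q2 : ℕ)
    (h1 : 0 < p1) (h1q : p1 < q1) (h2 : 0 < p2) (h2q : p2 < q2)
    (hfarey : (p2 : ℤ) * q1 - (p1 : ℤ) * q2 = 1)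
    (hord : (p1 : ℚ) / q1 < (p2 : ℚ) / q2) (hhalf : (p2 : ℚ) / q2 ≤ 1/2)
    (s1 s2 s3 : List Bool)
    (hs1 : IsSWord p1 q1 s1) (hs2 : IsSWord p2 q2 s2)
    (hs3 : IsSWord (p1 + p2) (q1 + q2) s3) :
    s3 = s2 ++ s1 :=
  stmt_12_general p1 q1 p2 q2 h1q h2q hfarey s1 s2 s3 hs1 hs2 hs3
end

section
/- Let r = p/q ∈ ℚ∩(0,1), s = s(r), t = t(r). If x ∈ (π(s^∞), π(t^∞)) and the T-orbit of x avoids the open interval (π(st^∞), π(ts^∞)), then the binary expansion of x is a shift of an infinite concatenation of the blocks s and t. -/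
/-- `π(w) = Σ_j w_j 2^{-j}`. -/
noncomputable def piW (w : ℕ → Bool) : ℝ :=
  ∑' j : ℕ, (if w j then (1:ℝ) else 0) / 2 ^ (j + 1)

/-- The infinite periodic word `w^∞`. -/
def periodize (w : List Bool) (j : ℕ) : Bool := w.getD (j % w.length) false

/-- The infinite word `u v^∞`. -/
def wordThenPeriodic (u v : List Bool) (j : ℕ) : Bool :=
  if j < u.length then u.getD j false else periodize v (j - u.length)

/-- `w` is the infinite concatenation `a 0 ++ a 1 ++ a 2 ++ ⋯`. -/
def IsConcat (a : ℕ → List Bool) (w : ℕ → Bool) : Prop :=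
  ∀ n : ℕ, ∀ j < (((List.range n).map a).flatten).length,
    (((List.range n).map a).flatten).getD j false = w j

/-!
The digits of `x` are read off its `T`-orbit, so that `T^[n] x` is the value of the `n`-th shift
of the digit sequence `w`. Since `piW` is monotone for the lexicographic order, and strictly so
except for the identification `π(u01^∞) = π(u10^∞)`, the orbit condition says that no shift
`σ^(nq) w` lies lexicographically strictly between `st^∞` and `ts^∞`. By induction every such
shift lies in `[s^∞, t^∞]`: on `[s^∞, st^∞]` the first `q` letters are forced to be `s` and
the next shift lands in `[s^∞, t^∞]` again, and symmetrically on `[ts^∞, t^∞]` with `t`.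
-/

open Filter

section Shift

variable {α : Type*}

def shiftSeq (n : ℕ) (w : ℕ → α) : ℕ → α := fun j => w (j + n)

@[simp]
lemma shiftSeq_apply (n : ℕ) (w : ℕ → α) (j : ℕ) : shiftSeq n w j = w (j + n) := rfl

@[simp]
lemma shiftSeq_zero (w : ℕ → α) : shiftSeq 0 w = w := rfl

lemma shiftSeq_shiftSeq (m n : ℕ) (w : ℕ → α) :
    shiftSeq m (shiftSeq n w) = shiftSeq (m + n) w := by
  ext j
  simp [add_assoc]

end Shift

lemma summable_piW (w : ℕ → Bool) :
    Summable fun j : ℕ => (if w j then (1 : ℝ) else 0) / 2 ^ (j + 1) := by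
  refine .of_nonneg_of_le (fun j => by positivity) (fun j => ?_)
    ((summable_nat_add_iff 1).2 summable_geometric_two)
  rw [one_div_pow]
  gcongr
  split_ifs <;> norm_num

lemma piW_nonneg (w : ℕ → Bool) : 0 ≤ piW w :=
  tsum_nonneg fun j => by positivity

lemma piW_add_piW_not (w : ℕ → Bool) : piW w + piW (fun j => !w j) = 1 := by
  rw [piW, piW, ← (summable_piW w).tsum_add (summable_piW _)]
  refine (congrArg tsum (funext fun j => ?_)).trans (tsum_geometric_two' 1)
  cases w j <;> simp [pow_succ, mul_comm, div_eq_mul_inv]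

lemma piW_le_one (w : ℕ → Bool) : piW w ≤ 1 := by
  linarith [piW_add_piW_not w, piW_nonneg fun j => !w j]

lemma piW_pos {w : ℕ → Bool} {i : ℕ} (hi : w i = true) : 0 < piW w :=
  (summable_piW w).tsum_pos (fun j => by positivity) i (by simp [hi])

lemma piW_lt_one {w : ℕ → Bool} {i : ℕ} (hi : w i = false) : piW w < 1 := by
  linarith [piW_add_piW_not w, piW_pos (w := fun j => !w j) (i := i) (by simp [hi])]

lemma piW_eq_sum_add_shiftSeq (w : ℕ → Bool) (n : ℕ) :
    piW w = ∑ j ∈ Finset.range n, (if w j then (1 : ℝ) else 0) / 2 ^ (j + 1)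
      + piW (shiftSeq n w) / 2 ^ n := by
  rw [piW, ← (summable_piW w).sum_add_tsum_nat_add n, piW, ← tsum_div_const]
  congr 2
  ext j
  rw [shiftSeq_apply, div_div, ← pow_add]
  ring_nf

lemma piW_eq_head_add (w : ℕ → Bool) :
    piW w = ((if w 0 then 1 else 0) + piW (shiftSeq 1 w)) / 2 := by
  rw [piW_eq_sum_add_shiftSeq w 1]
  simp [add_div]

lemma piW_sub_piW_of_toLex_lt {u v : ℕ → Bool} (h : toLex u < toLex v) :
    ∃ i, piW v - piW u =
      (1 + piW (shiftSeq (i + 1) v) - piW (shiftSeq (i + 1) u)) / 2 ^ (i + 1) := by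
  obtain ⟨i, hpre, hi⟩ : ∃ i, (∀ j < i, u j = v j) ∧ u i < v i := h
  obtain ⟨hu, hv⟩ := Bool.lt_iff.1 hi
  refine ⟨i, ?_⟩
  rw [piW_eq_sum_add_shiftSeq u (i + 1), piW_eq_sum_add_shiftSeq v (i + 1),
    Finset.sum_range_succ, Finset.sum_range_succ,
    Finset.sum_congr rfl fun j hj => by rw [← hpre j (Finset.mem_range.1 hj)], hu, hv]
  simp only [Bool.false_eq_true, if_true, if_false]
  ring

lemma piW_le_piW_of_toLex_le {u v : ℕ → Bool} (h : toLex u ≤ toLex v) : piW u ≤ piW v := by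
  obtain h | h := h.lt_or_eq
  · obtain ⟨i, hi⟩ := piW_sub_piW_of_toLex_lt h
    have hnum : 0 ≤ 1 + piW (shiftSeq (i + 1) v) - piW (shiftSeq (i + 1) u) := by
      linarith [piW_le_one (shiftSeq (i + 1) u), piW_nonneg (shiftSeq (i + 1) v)]
    have : 0 ≤ piW v - piW u := hi ▸ by positivity
    linarith
  · rw [toLex.injective h]

lemma toLex_lt_of_piW_lt {u v : ℕ → Bool} (h : piW u < piW v) : toLex u < toLex v :=
  lt_of_not_ge fun hvu => (piW_le_piW_of_toLex_le hvu).not_gt h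

lemma exists_shiftSeq_eq_of_frequently {w : ℕ → Bool} {b : Bool} (h : ∃ᶠ j in atTop, w j = b)
    (n : ℕ) : ∃ j, shiftSeq n w j = b := by
  obtain ⟨k, hk, hwk⟩ := frequently_atTop.1 h n
  exact ⟨k - n, by rwa [shiftSeq_apply, Nat.sub_add_cancel hk]⟩

lemma piW_lt_piW_of_toLex_lt {u v : ℕ → Bool} (h : toLex u < toLex v)
    (hfreq : (∃ᶠ j in atTop, u j = false) ∨ ∃ᶠ j in atTop, v j = true) : piW u < piW v := by
  obtain ⟨i, hi⟩ := piW_sub_piW_of_toLex_lt h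
  have hnum : 0 < 1 + piW (shiftSeq (i + 1) v) - piW (shiftSeq (i + 1) u) := by
    have := piW_le_one (shiftSeq (i + 1) u)
    have := piW_nonneg (shiftSeq (i + 1) v)
    rcases hfreq with hu | hv
    · obtain ⟨j, hj⟩ := exists_shiftSeq_eq_of_frequently hu (i + 1)
      linarith [piW_lt_one hj]
    · obtain ⟨j, hj⟩ := exists_shiftSeq_eq_of_frequently hv (i + 1)
      linarith [piW_pos hj]
  have : 0 < piW v - piW u := hi ▸ by positivity
  linarith

/-- Unlike `Real.digits`, at dyadic points this picks the expansion ending in `1^∞`, the one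
for which `T^[n] x = piW (shiftSeq n (binDigits x))`. -/
noncomputable def binDigits (x : ℝ) (n : ℕ) : Bool := decide (1 / 2 < T^[n] x)

lemma mapsTo_T : Set.MapsTo T (Set.Icc 0 1) (Set.Icc 0 1) := by
  rintro y ⟨h0, h1⟩
  unfold T
  split_ifs <;> constructor <;> linarith

lemma shiftSeq_binDigits (x : ℝ) (n : ℕ) : shiftSeq n (binDigits x) = binDigits (T^[n] x) := by
  ext j
  simp only [shiftSeq_apply, binDigits, Function.iterate_add_apply]

lemma eq_binDigits_zero_add_T (y : ℝ) : y = ((if binDigits y 0 then 1 else 0) + T y) / 2 := by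
  rcases le_or_gt y 2⁻¹ with h | h
  · simp [binDigits, T, h, h.not_gt]
  · simp [binDigits, T, h, h.not_ge]

lemma piW_binDigits {x : ℝ} (hx : x ∈ Set.Icc 0 1) : piW (binDigits x) = x := by
  set f : ℝ → ℝ := fun y => piW (binDigits y) - y
  have hf : ∀ y, f y = f (T y) / 2 := fun y => by
    have h1 := piW_eq_head_add (binDigits y)
    rw [shiftSeq_binDigits, Function.iterate_one] at h1
    linarith [eq_binDigits_zero_add_T y]
  have hbound : ∀ n : ℕ, ∀ y ∈ Set.Icc (0 : ℝ) 1, |f y| ≤ (1 / 2) ^ n := by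
    intro n
    induction n with
    | zero =>
      rintro y ⟨h0, h1⟩
      rw [pow_zero, abs_sub_le_iff]
      constructor <;> linarith [piW_le_one (binDigits y), piW_nonneg (binDigits y)]
    | succ n ih =>
      intro y hy
      rw [hf, abs_div, abs_two, pow_succ]
      linarith [ih (T y) (mapsTo_T hy)]
  by_contra hne
  obtain ⟨n, hn⟩ := exists_pow_lt_of_lt_one (abs_pos.2 (sub_ne_zero.2 hne))
    (by norm_num : (1 / 2 : ℝ) < 1)
  exact (hbound n x hx).not_gt hn

lemma piW_shiftSeq_binDigits {x : ℝ} (hx : x ∈ Set.Icc 0 1) (n : ℕ) :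
    piW (shiftSeq n (binDigits x)) = T^[n] x := by
  rw [shiftSeq_binDigits, piW_binDigits (mapsTo_T.iterate n hx)]

lemma eqOn_of_toLex_mem_Icc {lo hi v : ℕ → Bool} {n : ℕ} (hn : ∀ j < n, lo j = hi j)
    (hv : toLex v ∈ Set.Icc (toLex lo) (toLex hi)) : ∀ j < n, v j = lo j := by
  intro j hj
  induction j using Nat.strong_induction_on with
  | _ j ih =>
    have hlo := Pi.apply_le_of_toLex hv.1 fun i hi => (ih i hi (hi.trans hj)).symm
    have hhi := Pi.apply_le_of_toLex hv.2 fun i hi =>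
      (ih i hi (hi.trans hj)).trans (hn i (hi.trans hj))
    exact le_antisymm (hn j hj ▸ hhi) hlo

lemma toLex_shiftSeq_le {u v : ℕ → Bool} {n : ℕ} (hn : ∀ j < n, u j = v j)
    (h : toLex u ≤ toLex v) : toLex (shiftSeq n u) ≤ toLex (shiftSeq n v) := by
  obtain h | h := h.lt_or_eq
  · obtain ⟨i, hpre, hi⟩ : ∃ i, (∀ j < i, u j = v j) ∧ u i < v i := h
    have hni : n ≤ i := by
      by_contra! hin
      exact hi.ne (hn i hin)
    refine le_of_lt ⟨i - n, fun j hj => hpre (j + n) (by omega), ?_⟩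
    simpa [Nat.sub_add_cancel hni] using hi
  · rw [toLex.injective h]

lemma toLex_shiftSeq_mem_Icc {lo hi v : ℕ → Bool} {n : ℕ} (hn : ∀ j < n, lo j = hi j)
    (hv : toLex v ∈ Set.Icc (toLex lo) (toLex hi)) :
    toLex (shiftSeq n v) ∈ Set.Icc (toLex (shiftSeq n lo)) (toLex (shiftSeq n hi)) := by
  have hvlo := eqOn_of_toLex_mem_Icc hn hv
  exact ⟨toLex_shiftSeq_le (fun j hj => (hvlo j hj).symm) hv.1,
    toLex_shiftSeq_le (fun j hj => (hvlo j hj).trans (hn j hj)) hv.2⟩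

lemma periodize_of_lt {l : List Bool} {j : ℕ} (hj : j < l.length) :
    periodize l j = l.getD j false := by
  rw [periodize, Nat.mod_eq_of_lt hj]

lemma shiftSeq_periodize (l : List Bool) : shiftSeq l.length (periodize l) = periodize l := by
  ext j
  simp [periodize]

lemma wordThenPeriodic_of_lt {u v : List Bool} {j : ℕ} (hj : j < u.length) :
    wordThenPeriodic u v j = u.getD j false :=
  if_pos hj

lemma shiftSeq_wordThenPeriodic (u v : List Bool) :
    shiftSeq u.length (wordThenPeriodic u v) = periodize v := by
  ext j
  simp [wordThenPeriodic]

lemma frequently_periodize_eq {l : List Bool} {b : Bool} (hb : b ∈ l) :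
    ∃ᶠ j in atTop, periodize l j = b := by
  obtain ⟨i, hi, rfl⟩ := List.mem_iff_getElem.1 hb
  refine frequently_atTop.2 fun a => ⟨a * l.length + i, ?_, ?_⟩
  · nlinarith
  · simp [periodize, Nat.mod_eq_of_lt hi, hi]

lemma frequently_wordThenPeriodic_eq (u : List Bool) {v : List Bool} {b : Bool} (hb : b ∈ v) :
    ∃ᶠ j in atTop, wordThenPeriodic u v j = b := by
  refine frequently_atTop.2 fun a => ?_
  obtain ⟨k, hk, hkb⟩ := frequently_atTop.1 (frequently_periodize_eq hb) a
  refine ⟨k + u.length, by omega, ?_⟩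
  rwa [← shiftSeq_apply u.length (wordThenPeriodic u v), shiftSeq_wordThenPeriodic]

lemma exists_block_of_toLex_mem_Icc {s t : List Bool} (hst : s.length = t.length) {v : ℕ → Bool}
    (hv : toLex v ∈ Set.Icc (toLex (periodize s)) (toLex (periodize t)))
    (hgap : toLex v ∉ Set.Ioo (toLex (wordThenPeriodic s t)) (toLex (wordThenPeriodic t s))) :
    ∃ b, (b = s ∨ b = t) ∧ (∀ j < s.length, v j = b.getD j false) ∧
      toLex (shiftSeq s.length v) ∈ Set.Icc (toLex (periodize s)) (toLex (periodize t)) := by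
  rcases le_or_gt (toLex v) (toLex (wordThenPeriodic s t)) with hle | hlt
  · have hpre : ∀ j < s.length, periodize s j = wordThenPeriodic s t j := fun j hj => by
      rw [periodize_of_lt hj, wordThenPeriodic_of_lt hj]
    have hI : toLex v ∈ Set.Icc (toLex (periodize s)) (toLex (wordThenPeriodic s t)) := ⟨hv.1, hle⟩
    refine ⟨s, .inl rfl, fun j hj =>
      (eqOn_of_toLex_mem_Icc hpre hI j hj).trans (periodize_of_lt hj), ?_⟩
    simpa only [shiftSeq_periodize, shiftSeq_wordThenPeriodic] using toLex_shiftSeq_mem_Icc hpre hI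
  · have hpre : ∀ j < t.length, wordThenPeriodic t s j = periodize t j := fun j hj => by
      rw [periodize_of_lt hj, wordThenPeriodic_of_lt hj]
    have hI : toLex v ∈ Set.Icc (toLex (wordThenPeriodic t s)) (toLex (periodize t)) :=
      ⟨not_lt.1 fun h => hgap ⟨hlt, h⟩, hv.2⟩
    rw [hst]
    refine ⟨t, .inr rfl, fun j hj =>
      (eqOn_of_toLex_mem_Icc hpre hI j hj).trans (wordThenPeriodic_of_lt hj), ?_⟩
    simpa only [shiftSeq_periodize, shiftSeq_wordThenPeriodic] using toLex_shiftSeq_mem_Icc hpre hI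

lemma isConcat_of_blocks {a : ℕ → List Bool} {w : ℕ → Bool} {q : ℕ}
    (hlen : ∀ i, (a i).length = q) (hblock : ∀ n, ∀ j < q, w (j + n * q) = (a n).getD j false) :
    IsConcat a w := by
  have hflat : ∀ n, (((List.range n).map a).flatten).length = n * q := fun n => by
    simp [List.length_flatten, Function.comp_def, hlen, mul_comm]
  intro n
  induction n with
  | zero => simp
  | succ n ih =>
    intro j hj
    simp only [List.range_succ, List.map_append, List.map_cons, List.map_nil, List.flatten_append,
      List.flatten_cons, List.flatten_nil, List.append_nil]
    rw [hflat, Nat.succ_mul] at hj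
    rcases lt_or_ge j (n * q) with hjn | hjn
    · rw [List.getD_append _ _ _ _ (by rwa [hflat]), ih j (by rwa [hflat])]
    · rw [List.getD_append_right _ _ _ _ (by rwa [hflat]), hflat, ← hblock n _ (by omega),
        Nat.sub_add_cancel hjn]

theorem exists_isConcat_of_forall_toLex_notMem {s t : List Bool} (hst : s.length = t.length)
    {w : ℕ → Bool} (hw : toLex w ∈ Set.Icc (toLex (periodize s)) (toLex (periodize t)))
    (hgap : ∀ n, toLex (shiftSeq (n * s.length) w) ∉
      Set.Ioo (toLex (wordThenPeriodic s t)) (toLex (wordThenPeriodic t s))) :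
    ∃ a : ℕ → List Bool, (∀ i, a i = s ∨ a i = t) ∧ IsConcat a w := by
  have hinv : ∀ n, toLex (shiftSeq (n * s.length) w) ∈
      Set.Icc (toLex (periodize s)) (toLex (periodize t)) := by
    intro n
    induction n with
    | zero => simpa using hw
    | succ n ih =>
      obtain ⟨-, -, -, h⟩ := exists_block_of_toLex_mem_Icc hst ih (hgap n)
      rwa [shiftSeq_shiftSeq, Nat.add_comm, ← Nat.succ_mul] at h
  choose a ha hblock _ using fun n => exists_block_of_toLex_mem_Icc hst (hinv n) (hgap n)
  refine ⟨a, ha, isConcat_of_blocks (q := s.length) (fun i => ?_) hblock⟩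
  rcases ha i with h | h <;> simp [h, hst]

theorem stmt_15_general (p q : ℕ) (hp : 0 < p) (hpq : p < q)
    (s t : List Bool) (hs : IsSWord p q s) (ht : IsTWord p q t)
    (x : ℝ) (hx : x ∈ Set.Ioo (piW (periodize s)) (piW (periodize t)))
    (horbit : ∀ n : ℕ, T^[n] x ∉
      Set.Ioo (piW (wordThenPeriodic s t)) (piW (wordThenPeriodic t s))) :
    ∃ w : ℕ → Bool, piW w = x ∧
      ∃ (a : ℕ → List Bool) (w0 : ℕ → Bool) (k : ℕ),
        (∀ i, a i = s ∨ a i = t) ∧ IsConcat a w0 ∧ w = fun j => w0 (j + k) := by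
  obtain ⟨hsl, hsc, -⟩ := hs
  obtain ⟨htl, htc, -⟩ := ht
  have hx01 : x ∈ Set.Icc 0 1 := ⟨(piW_nonneg _).trans hx.1.le, hx.2.le.trans (piW_le_one _)⟩
  have hst_false : ∃ᶠ j in atTop, wordThenPeriodic s t j = false := by
    obtain ⟨b, hb, hbt⟩ := List.count_lt_length_iff.1 (show t.count true < t.length by omega)
    exact frequently_wordThenPeriodic_eq s (by simpa [hbt] using hb)
  have hts_true : ∃ᶠ j in atTop, wordThenPeriodic t s j = true :=
    frequently_wordThenPeriodic_eq t (List.count_pos_iff.1 (hsc ▸ hp))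
  rw [← piW_binDigits hx01] at hx
  have hgap : ∀ n, toLex (shiftSeq (n * s.length) (binDigits x)) ∉
      Set.Ioo (toLex (wordThenPeriodic s t)) (toLex (wordThenPeriodic t s)) := fun n h =>
    horbit (n * s.length) (piW_shiftSeq_binDigits hx01 _ ▸
      ⟨piW_lt_piW_of_toLex_lt h.1 (.inl hst_false), piW_lt_piW_of_toLex_lt h.2 (.inr hts_true)⟩)
  obtain ⟨a, ha, hconcat⟩ := exists_isConcat_of_forall_toLex_notMem (hsl.trans htl.symm)
    ⟨(toLex_lt_of_piW_lt hx.1).le, (toLex_lt_of_piW_lt hx.2).le⟩ hgap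
  exact ⟨binDigits x, piW_binDigits hx01, a, binDigits x, 0, ha, hconcat, rfl⟩

theorem stmt_15 (p q : ℕ) (hp : 0 < p) (hpq : p < q) (hco : Nat.Coprime p q)
    (s t : List Bool) (hs : IsSWord p q s) (ht : IsTWord p q t)
    (x : ℝ) (hx : x ∈ Set.Ioo (piW (periodize s)) (piW (periodize t)))
    (horbit : ∀ n : ℕ, T^[n] x ∉
      Set.Ioo (piW (wordThenPeriodic s t)) (piW (wordThenPeriodic t s))) :
    ∃ w : ℕ → Bool, piW w = x ∧
      ∃ (a : ℕ → List Bool) (w0 : ℕ → Bool) (k : ℕ),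
        (∀ i, a i = s ∨ a i = t) ∧ IsConcat a w0 ∧ w = fun j => w0 (j + k) :=
  stmt_15_general p q hp hpq s t hs ht x hx horbit
end
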